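/- arXiv:2509.08850 — 2 statements merged into one kernel-verified Lean document; each statement's English description precedes it below -/
import Mathlib

section
/- Let α, β, γ > 0, μ, r, y ∈ ℝ. Define x*(y) = −(αy + γμ + (α + β + γ)r)/β. Then the sender's closed-form payoff x ↦ Π(x, y) is strictly increasing on (−∞, x*(y)], strictly decreasing on [x*(y), ∞), and attains its unique global maximum at x*(y). Moreover, the endogenous conflict of interests satisfies Δ = x̂(y) − x*(y) = (α + β + γ)·r/β for every y, where x̂(y) = −(αy + γμ)/β. (Proposition 2: the Sender-optimal threshold is unique and the conflict of interests is proportional to the externality r.) -/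
open MeasureTheory

/-- Gaussian density of `N(m, v)` evaluated at `t`. -/
noncomputable def phi (t m v : ℝ) : ℝ :=
  (2 * Real.pi * v) ^ (-(1:ℝ)/2) * Real.exp (-(t - m)^2 / (2*v))

/-- Gaussian cumulative distribution function of `N(m, v)` evaluated at `t`. -/
noncomputable def Phi (t m v : ℝ) : ℝ := ∫ s in Set.Iic t, phi s m v

lemma phi_pos (t m v : ℝ) (hv : 0 < v) : 0 < phi t m v := by
  have h1 : (0:ℝ) < 2 * Real.pi * v := by positivity
  exact mul_pos (Real.rpow_pos_of_pos h1 _) (Real.exp_pos _)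

lemma phi_cont (m v : ℝ) : Continuous (fun t => phi t m v) := by
  unfold phi
  exact continuous_const.mul (Real.continuous_exp.comp (by continuity))

lemma phi_integrable (m v : ℝ) (hv : 0 < v) : Integrable (fun t => phi t m v) := by
  unfold phi
  apply Integrable.const_mul
  have hb : 0 < 1/(2*v) := by positivity
  have := (integrable_exp_neg_mul_sq hb).comp_sub_right m
  convert this using 2 with t
  ring_nf

lemma hasDerivAt_phi (x m v : ℝ) (hv : 0 < v) :
    HasDerivAt (fun t => phi t m v) (phi x m v * ((m - x)/v)) x := by
  have h1 : HasDerivAt (fun t : ℝ => -(t - m)^2 / (2*v)) ((m - x)/v) x := by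
    have h0 := ((((hasDerivAt_id x).sub_const m).pow 2).neg).div_const (2*v)
    simp only [id_eq, pow_one, Nat.cast_ofNat] at h0
    refine h0.congr_deriv ?_
    field_simp
    ring
  have h2 := (Real.hasDerivAt_exp _).comp x h1
  have h3 := h2.const_mul ((2 * Real.pi * v) ^ (-(1:ℝ)/2))
  refine h3.congr_deriv ?_
  unfold phi; ring

lemma hasDerivAt_Phi (x m v : ℝ) (hv : 0 < v) :
    HasDerivAt (fun t => Phi t m v) (phi x m v) x := by
  have hint := phi_integrable m v hv
  have key : ∀ t : ℝ, Phi t m v = Phi 0 m v + ∫ s in (0:ℝ)..t, phi s m v := by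
    intro t
    have := intervalIntegral.integral_Iic_sub_Iic (hint.integrableOn) (hint.integrableOn)
      (a := 0) (b := t)
    unfold Phi
    linarith [this]
  have hD : HasDerivAt (fun u => Phi 0 m v + ∫ s in (0:ℝ)..u, phi s m v) (phi x m v) x := by
    apply HasDerivAt.const_add
    exact intervalIntegral.integral_hasDerivAt_right
      hint.intervalIntegrable
      ((phi_cont m v).stronglyMeasurableAtFilter _ _)
      ((phi_cont m v).continuousAt)
  exact hD.congr_of_eventuallyEq (Filter.Eventually.of_forall key)

lemma payoff_aux (m v c R xs : ℝ) (hv : 0 < v) (hc : 0 < c)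
    (hxs : xs = m - R * v / c) :
    StrictMonoOn (fun x => R * (1 - Phi x m v) + c * phi x m v) (Set.Iic xs) ∧
    StrictAntiOn (fun x => R * (1 - Phi x m v) + c * phi x m v) (Set.Ici xs) ∧
    (∀ x : ℝ, x ≠ xs →
      R * (1 - Phi x m v) + c * phi x m v < R * (1 - Phi xs m v) + c * phi xs m v) := by
  set F : ℝ → ℝ := fun x => R * (1 - Phi x m v) + c * phi x m v with hF
  have hD : ∀ x, HasDerivAt F (phi x m v * ((c/v) * (xs - x))) x := by
    intro x
    have h1 := hasDerivAt_Phi x m v hv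
    have h2 := hasDerivAt_phi x m v hv
    have h := (((hasDerivAt_const x (1:ℝ)).sub h1).const_mul R).add (h2.const_mul c)
    refine h.congr_deriv ?_
    rw [hxs]
    field_simp
    ring
  have hcont : Continuous F := continuous_iff_continuousAt.mpr fun x => (hD x).continuousAt
  have hmono : StrictMonoOn F (Set.Iic xs) := by
    apply strictMonoOn_of_deriv_pos (convex_Iic xs) hcont.continuousOn
    intro x hx
    rw [interior_Iic] at hx
    rw [(hD x).deriv]
    have h1 := phi_pos x m v hv
    have h2 : 0 < xs - x := sub_pos.mpr hx
    positivity
  have hanti : StrictAntiOn F (Set.Ici xs) := by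
    apply strictAntiOn_of_deriv_neg (convex_Ici xs) hcont.continuousOn
    intro x hx
    rw [interior_Ici] at hx
    rw [(hD x).deriv]
    apply mul_neg_of_pos_of_neg (phi_pos x m v hv)
    apply mul_neg_of_pos_of_neg (div_pos hc hv)
    simp only [Set.mem_Ioi] at hx
    linarith
  refine ⟨hmono, hanti, fun x hx => ?_⟩
  rcases lt_or_gt_of_ne hx with h | h
  · exact hmono (Set.mem_Iic.mpr h.le) (Set.mem_Iic.mpr le_rfl) h
  · exact hanti (Set.mem_Ici.mpr le_rfl) (Set.mem_Ici.mpr h.le) h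

/-- Proposition 2: the Sender-optimal threshold `x*(y) = −(αy + γμ + (α+β+γ)r)/β`
is the unique global maximizer of the sender's closed-form payoff `x ↦ Π(x, y)`
(which is strictly increasing before it and strictly decreasing after it), and the
endogenous conflict of interests is `Δ = x̂(y) − x*(y) = (α+β+γ)r/β`. -/
theorem sender_optimal_threshold (α β γ : ℝ) (hα : 0 < α) (hβ : 0 < β) (hγ : 0 < γ)
    (μ r y : ℝ) :
    let θb : ℝ := (α*y + γ*μ)/(α + γ)
    let V : ℝ := 1/β + 1/(α + γ)
    let Pay : ℝ → ℝ := fun x => (r + θb) * (1 - Phi x θb V) + (1/(α + γ)) * phi x θb V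
    let xstar : ℝ := -(α*y + γ*μ + (α + β + γ)*r)/β
    let xhat : ℝ := -(α*y + γ*μ)/β
    StrictMonoOn Pay (Set.Iic xstar) ∧
    StrictAntiOn Pay (Set.Ici xstar) ∧
    (∀ x : ℝ, x ≠ xstar → Pay x < Pay xstar) ∧
    xhat - xstar = (α + β + γ) * r / β := by
  intro θb V Pay xstar xhat
  have hag : 0 < α + γ := by linarith
  have hV : 0 < V := by
    show 0 < 1/β + 1/(α + γ); positivity
  have hc : 0 < 1/(α + γ) := by positivity
  have hxs : xstar = θb - (r + θb) * V / (1/(α + γ)) := by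
    show -(α*y + γ*μ + (α + β + γ)*r)/β =
      (α*y + γ*μ)/(α + γ) - (r + (α*y + γ*μ)/(α + γ)) * (1/β + 1/(α + γ)) / (1/(α + γ))
    field_simp
    ring
  obtain ⟨h1, h2, h3⟩ := payoff_aux θb V (1/(α + γ)) (r + θb) xstar hV hc hxs
  refine ⟨h1, h2, h3, ?_⟩
  show -(α*y + γ*μ)/β - -(α*y + γ*μ + (α + β + γ)*r)/β = (α + β + γ) * r / β
  field_simp
  ring
end

section
/- Let α, β, γ > 0, μ, r ∈ ℝ and fix x₀ ∈ ℝ. Then the sender's payoff difference between disclosure and concealment vanishes at extreme signals: Π(x̂(y), y) − Π(x₀, y) → 0 both as y → +∞ and as y → −∞, where x̂(y) = −(αy + γμ)/β. -/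
open MeasureTheory Filter

lemma phi_nonneg (t m v : ℝ) (hv : 0 < v) : 0 ≤ phi t m v := by
  unfold phi
  have h1 : (0:ℝ) ≤ (2 * Real.pi * v) ^ (-(1:ℝ)/2) :=
    Real.rpow_nonneg (by positivity) _
  exact mul_nonneg h1 (Real.exp_pos _).le

lemma phi_mono {s x₀ m v : ℝ} (hv : 0 < v) (h : (x₀ - m)^2 ≤ (s - m)^2) :
    phi s m v ≤ phi x₀ m v := by
  unfold phi
  have h1 : (0:ℝ) ≤ (2 * Real.pi * v) ^ (-(1:ℝ)/2) := by
    have : (0:ℝ) < 2 * Real.pi * v := by positivity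
    exact Real.rpow_nonneg this.le _
  apply mul_le_mul_of_nonneg_left _ h1
  apply Real.exp_le_exp.2
  have h2v : (0:ℝ) < 2 * v := by linarith
  exact (div_le_div_iff_of_pos_right h2v).2 (by linarith)

lemma integrable_phi (m v : ℝ) (hv : 0 < v) : Integrable (fun s => phi s m v) := by
  have h1 : Integrable (fun s : ℝ => Real.exp (-(1/(2*v)) * s^2)) :=
    integrable_exp_neg_mul_sq (by positivity)
  have h2 := (h1.comp_sub_right m).const_mul ((2 * Real.pi * v) ^ (-(1:ℝ)/2))
  refine h2.congr ?_
  filter_upwards with s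
  unfold phi
  congr 1
  rw [Real.exp_eq_exp]
  field_simp

lemma tendsto_pow_mul_exp_neg_sq (n : ℕ) {c : ℝ} (hc : 0 < c) :
    Tendsto (fun t : ℝ => t ^ n * Real.exp (-(c * t ^ 2))) atTop (nhds 0) := by
  have hmul : Tendsto (fun t : ℝ => c * t) atTop atTop :=
    Tendsto.const_mul_atTop hc tendsto_id
  have h1 : Tendsto (fun t : ℝ => (c * t) ^ n * Real.exp (-(c * t))) atTop (nhds 0) :=
    (Real.tendsto_pow_mul_exp_neg_atTop_nhds_zero n).comp hmul
  have h2 : Tendsto (fun t : ℝ => t ^ n * Real.exp (-(c * t))) atTop (nhds 0) := by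
    have h3 := h1.const_mul ((c⁻¹) ^ n)
    rw [mul_zero] at h3
    refine h3.congr fun t => ?_
    rw [← mul_assoc, ← mul_pow, inv_mul_cancel_left₀ hc.ne']
  apply squeeze_zero_norm' _ h2
  filter_upwards [eventually_ge_atTop (1:ℝ)] with t ht
  have ht0 : (0:ℝ) ≤ t := by linarith
  rw [Real.norm_eq_abs, abs_of_nonneg (by positivity)]
  apply mul_le_mul_of_nonneg_left _ (by positivity)
  apply Real.exp_le_exp.2
  nlinarith [mul_nonneg (mul_nonneg hc.le ht0) (sub_nonneg.2 ht)]

lemma poly_exp_tendsto (a b d : ℝ) {c : ℝ} (hc : 0 < c) :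
    Tendsto (fun t : ℝ => (a * t ^ 2 + b * t + d) * Real.exp (-(c * t ^ 2)))
      atTop (nhds 0) := by
  have h2 := (tendsto_pow_mul_exp_neg_sq 2 hc).const_mul a
  have h1 := (tendsto_pow_mul_exp_neg_sq 1 hc).const_mul b
  have h0 := (tendsto_pow_mul_exp_neg_sq 0 hc).const_mul d
  have h := (h2.add h1).add h0
  simp only [mul_zero, add_zero] at h
  refine h.congr fun t => ?_
  ring

lemma Phi_diff_bound {m v x₀ xh : ℝ} (hv : 0 < v)
    (h : (xh ≤ x₀ ∧ x₀ ≤ m) ∨ (m ≤ x₀ ∧ x₀ ≤ xh)) :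
    |Phi x₀ m v - Phi xh m v| ≤ |x₀ - xh| * phi x₀ m v := by
  have hint := integrable_phi m v hv
  have heq : Phi x₀ m v - Phi xh m v = ∫ s in xh..x₀, phi s m v :=
    intervalIntegral.integral_Iic_sub_Iic hint.integrableOn hint.integrableOn
  rw [heq, ← Real.norm_eq_abs, mul_comm]
  apply intervalIntegral.norm_integral_le_of_norm_le_const
  intro s hs
  rw [Real.norm_eq_abs, abs_of_nonneg (phi_nonneg _ _ _ hv)]
  apply phi_mono hv
  rcases Set.mem_uIoc.1 hs with ⟨h1, h2⟩ | ⟨h1, h2⟩ <;>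
    rcases h with ⟨ha, hb⟩ | ⟨ha, hb⟩
  · nlinarith [mul_nonneg (by linarith : (0:ℝ) ≤ x₀ - s) (by linarith : (0:ℝ) ≤ 2*m - s - x₀)]
  · nlinarith
  · nlinarith
  · nlinarith [mul_nonneg (by linarith : (0:ℝ) ≤ s - x₀) (by linarith : (0:ℝ) ≤ s + x₀ - 2*m)]

lemma payoff_aux_s13 (V c' lam r x₀ : ℝ) (hV : 0 < V) (hc' : 0 < c') (hlam : 0 < lam)
    (m : ℝ → ℝ) (l : Filter ℝ)
    (habs : Tendsto (fun y => |m y - x₀|) l atTop)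
    (hreg : ∀ᶠ y in l, (-(lam * m y) ≤ x₀ ∧ x₀ ≤ m y) ∨ (m y ≤ x₀ ∧ x₀ ≤ -(lam * m y))) :
    Tendsto (fun y =>
      ((r + m y) * (1 - Phi (-(lam * m y)) (m y) V) + c' * phi (-(lam * m y)) (m y) V)
      - ((r + m y) * (1 - Phi x₀ (m y) V) + c' * phi x₀ (m y) V)) l (nhds 0) := by
  set K : ℝ := (2 * Real.pi * V) ^ (-(1:ℝ)/2) with hKdef
  set A : ℝ := |r + x₀| with hAdef
  set B : ℝ := |x₀ + lam * x₀| with hBdef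
  set F : ℝ → ℝ := fun t => ((t + A) * (lam * t + B) + 2 * c') *
    (K * Real.exp (-(1/(2*V) * t ^ 2))) with hFdef
  have hF : Tendsto F atTop (nhds 0) := by
    have h := (poly_exp_tendsto lam (B + A * lam) (A * B + 2 * c')
      (c := 1/(2*V)) (by positivity)).const_mul K
    rw [mul_zero] at h
    refine h.congr fun t => ?_
    simp only [hFdef]
    ring
  have hcomp : Tendsto (fun y => F (|m y - x₀|)) l (nhds 0) := hF.comp habs
  apply squeeze_zero_norm' _ hcomp
  filter_upwards [hreg] with y hy
  set t := |m y - x₀| with htdef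
  set xh : ℝ := -(lam * m y) with hxhdef
  have ht0 : 0 ≤ t := abs_nonneg _
  have hA0 : 0 ≤ A := abs_nonneg _
  have hB0 : 0 ≤ B := abs_nonneg _
  have hphi0 : 0 ≤ phi x₀ (m y) V := phi_nonneg _ _ _ hV
  have hphih : phi xh (m y) V ≤ phi x₀ (m y) V := by
    apply phi_mono hV
    rcases hy with ⟨ha, hb⟩ | ⟨ha, hb⟩
    · nlinarith [mul_nonneg (by linarith : (0:ℝ) ≤ x₀ - xh)
        (by linarith : (0:ℝ) ≤ 2 * (m y) - x₀ - xh)]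
    · nlinarith [mul_nonneg (by linarith : (0:ℝ) ≤ xh - x₀)
        (by linarith : (0:ℝ) ≤ xh + x₀ - 2 * (m y))]
  have hphihn : 0 ≤ phi xh (m y) V := phi_nonneg _ _ _ hV
  have hPhi : |Phi x₀ (m y) V - Phi xh (m y) V| ≤ |x₀ - xh| * phi x₀ (m y) V :=
    Phi_diff_bound hV hy
  have hrm : |r + m y| ≤ t + A := by
    calc |r + m y| = |(m y - x₀) + (r + x₀)| := by ring_nf
    _ ≤ |m y - x₀| + |r + x₀| := abs_add_le _ _
  have hxd : |x₀ - xh| ≤ lam * t + B := by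
    have : x₀ - xh = lam * (m y - x₀) + (x₀ + lam * x₀) := by
      rw [hxhdef]; ring
    rw [this]
    calc |lam * (m y - x₀) + (x₀ + lam * x₀)|
        ≤ |lam * (m y - x₀)| + |x₀ + lam * x₀| := abs_add_le _ _
    _ = lam * t + B := by rw [abs_mul, abs_of_pos hlam]
  have hdphi : |phi xh (m y) V - phi x₀ (m y) V| ≤ phi x₀ (m y) V :=
    abs_le.2 ⟨by linarith, by linarith⟩
  have hphieq : phi x₀ (m y) V = K * Real.exp (-(1/(2*V) * t ^ 2)) := by
    simp only [phi, hKdef]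
    congr 1
    rw [htdef, sq_abs]
    ring
  have key : ‖((r + m y) * (1 - Phi xh (m y) V) + c' * phi xh (m y) V)
      - ((r + m y) * (1 - Phi x₀ (m y) V) + c' * phi x₀ (m y) V)‖
      ≤ ((t + A) * (lam * t + B) + 2 * c') * phi x₀ (m y) V := by
    have hrw : ((r + m y) * (1 - Phi xh (m y) V) + c' * phi xh (m y) V)
        - ((r + m y) * (1 - Phi x₀ (m y) V) + c' * phi x₀ (m y) V)
        = (r + m y) * (Phi x₀ (m y) V - Phi xh (m y) V)
          + c' * (phi xh (m y) V - phi x₀ (m y) V) := by ring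
    rw [hrw, Real.norm_eq_abs]
    have e0 : |Phi x₀ (m y) V - Phi xh (m y) V| ≤ (lam * t + B) * phi x₀ (m y) V :=
      hPhi.trans (mul_le_mul_of_nonneg_right hxd hphi0)
    have e1 : |r + m y| * |Phi x₀ (m y) V - Phi xh (m y) V|
        ≤ (t + A) * ((lam * t + B) * phi x₀ (m y) V) :=
      mul_le_mul hrm e0 (abs_nonneg _) (by linarith)
    have e2 : c' * |phi xh (m y) V - phi x₀ (m y) V| ≤ c' * phi x₀ (m y) V :=
      mul_le_mul_of_nonneg_left hdphi hc'.le
    calc |(r + m y) * (Phi x₀ (m y) V - Phi xh (m y) V)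
          + c' * (phi xh (m y) V - phi x₀ (m y) V)|
        ≤ |(r + m y) * (Phi x₀ (m y) V - Phi xh (m y) V)|
          + |c' * (phi xh (m y) V - phi x₀ (m y) V)| := abs_add_le _ _
    _ = |r + m y| * |Phi x₀ (m y) V - Phi xh (m y) V|
          + c' * |phi xh (m y) V - phi x₀ (m y) V| := by
        rw [abs_mul, abs_mul, abs_of_pos hc']
    _ ≤ ((t + A) * (lam * t + B) + 2 * c') * phi x₀ (m y) V := by
        nlinarith [mul_nonneg hc'.le hphi0]
  calc ‖((r + m y) * (1 - Phi xh (m y) V) + c' * phi xh (m y) V)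
      - ((r + m y) * (1 - Phi x₀ (m y) V) + c' * phi x₀ (m y) V)‖
      ≤ ((t + A) * (lam * t + B) + 2 * c') * phi x₀ (m y) V := key
  _ = F t := by rw [hphieq, hFdef]

/-- The sender's payoff difference between disclosure and concealment vanishes at
extreme signals: `Π(x̂(y), y) − Π(x₀, y) → 0` as `y → ±∞`. -/
theorem payoff_difference_vanishes_at_extremes (α β γ : ℝ)
    (hα : 0 < α) (hβ : 0 < β) (hγ : 0 < γ) (μ r x₀ : ℝ) :
    let θb : ℝ → ℝ := fun y => (α*y + γ*μ)/(α + γ)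
    let V : ℝ := 1/β + 1/(α + γ)
    let Pay : ℝ → ℝ → ℝ := fun x y =>
      (r + θb y) * (1 - Phi x (θb y) V) + (1/(α + γ)) * phi x (θb y) V
    let xhat : ℝ → ℝ := fun y => -(α*y + γ*μ)/β
    Tendsto (fun y => Pay (xhat y) y - Pay x₀ y) atTop (nhds 0) ∧
    Tendsto (fun y => Pay (xhat y) y - Pay x₀ y) atBot (nhds 0) := by
  intro θb V Pay xhat
  have hαγ : 0 < α + γ := by linarith
  have hV : 0 < V := by simp only [V]; positivity
  have hc' : 0 < 1/(α + γ) := by positivity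
  have hlam : 0 < (α + γ)/β := by positivity
  have harg : ∀ y, -((α + γ)/β * θb y) = xhat y := by
    intro y
    simp only [θb, xhat]
    field_simp
  have hmTop : Tendsto θb atTop atTop := by
    apply Tendsto.atTop_div_const hαγ
    exact tendsto_atTop_add_const_right _ (γ*μ) (Tendsto.const_mul_atTop hα tendsto_id)
  have hmBot : Tendsto θb atBot atBot := by
    apply Tendsto.atBot_div_const hαγ
    exact tendsto_atBot_add_const_right _ (γ*μ) ((tendsto_const_mul_atBot_of_pos hα).2 tendsto_id)
  constructor
  · have habs : Tendsto (fun y => |θb y - x₀|) atTop atTop :=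
      tendsto_abs_atTop_atTop.comp (tendsto_atTop_add_const_right _ (-x₀) hmTop)
    have hreg : ∀ᶠ y in atTop,
        (-((α + γ)/β * θb y) ≤ x₀ ∧ x₀ ≤ θb y) ∨
        (θb y ≤ x₀ ∧ x₀ ≤ -((α + γ)/β * θb y)) := by
      filter_upwards [hmTop.eventually_ge_atTop (max x₀ (|x₀| / ((α + γ)/β)))] with y hy
      left
      have h1 : x₀ ≤ θb y := le_trans (le_max_left _ _) hy
      have h2 : |x₀| / ((α + γ)/β) ≤ θb y := le_trans (le_max_right _ _) hy
      have h3 : |x₀| ≤ θb y * ((α + γ)/β) := (div_le_iff₀ hlam).1 h2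
      have h4 : -|x₀| ≤ x₀ := neg_abs_le x₀
      constructor
      · linarith [mul_comm (θb y) ((α + γ)/β), h3, h4]
      · exact h1
    have h := payoff_aux_s13 V (1/(α + γ)) ((α + γ)/β) r x₀ hV hc' hlam θb atTop habs hreg
    refine (h.congr fun y => ?_)
    rw [harg y]
  · have habs : Tendsto (fun y => |θb y - x₀|) atBot atTop :=
      tendsto_abs_atBot_atTop.comp (tendsto_atBot_add_const_right _ (-x₀) hmBot)
    have hreg : ∀ᶠ y in atBot,
        (-((α + γ)/β * θb y) ≤ x₀ ∧ x₀ ≤ θb y) ∨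
        (θb y ≤ x₀ ∧ x₀ ≤ -((α + γ)/β * θb y)) := by
      filter_upwards [hmBot.eventually_le_atBot (min x₀ (-|x₀| / ((α + γ)/β)))] with y hy
      right
      have h1 : θb y ≤ x₀ := le_trans hy (min_le_left _ _)
      have h2 : θb y ≤ -|x₀| / ((α + γ)/β) := le_trans hy (min_le_right _ _)
      have h3 : θb y * ((α + γ)/β) ≤ -|x₀| := by
        have := (le_div_iff₀ hlam).1 h2
        linarith
      have h4 : -|x₀| ≤ x₀ := neg_abs_le x₀
      constructor
      · exact h1
      · linarith [mul_comm (θb y) ((α + γ)/β), h3, le_abs_self x₀]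
    have h := payoff_aux_s13 V (1/(α + γ)) ((α + γ)/β) r x₀ hV hc' hlam θb atBot habs hreg
    refine (h.congr fun y => ?_)
    rw [harg y]
end
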